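/- arXiv:2011.09889 — 2 statements merged into one kernel-verified Lean document; each statement's English description precedes it below -/
import Mathlib

section
/- If y : (0,∞) → ℝ is twice differentiable, satisfies y''(x) = y(x)^{3/2}/sqrt(x), y > 0, and extends continuously to [0,∞) with y(0) = 1, y'(0) = -B for some B, and y(x) → 0, y'(x) → 0 as x → ∞, with (y')^2 and y^{5/2}/sqrt(x) integrable on (0,∞), then B = ∫₀^∞ [ (y'(x))^2 + y(x)^{5/2}/sqrt(x) ] dx. -/
/-! Multiplying the equation by `y` gives `(y y')' = (y')² + y^{5/2}/√x`, so the integral is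
`lim_{∞} y y' - lim_{0⁺} y y' = 0 - 1 · (-B) = B`. -/

open Real MeasureTheory Set Filter Topology

theorem integral_Ioi_of_hasDerivAt_of_tendsto_nhdsGT {E : Type*} [NormedAddCommGroup E]
    [NormedSpace ℝ E] [CompleteSpace E] {f f' : ℝ → E} {a : ℝ} {m n : E}
    (hderiv : ∀ x ∈ Ioi a, HasDerivAt f (f' x) x) (f'int : IntegrableOn f' (Ioi a))
    (hbot : Tendsto f (𝓝[>] a) (𝓝 m)) (htop : Tendsto f atTop (𝓝 n)) :
    ∫ x in Ioi a, f' x = n - m := by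
  have hagree : ∀ x ∈ Ioi a, Function.update f a m x = f x := fun x hx =>
    Function.update_of_ne (ne_of_gt hx) _ _
  have hcont : ContinuousWithinAt (Function.update f a m) (Ici a) a := by
    rw [← continuousWithinAt_Ioi_iff_Ici, ContinuousWithinAt, Function.update_self]
    exact hbot.congr' (eventually_nhdsWithin_of_forall fun x hx => (hagree x hx).symm)
  have hderiv' : ∀ x ∈ Ioi a, HasDerivAt (Function.update f a m) (f' x) x := fun x hx =>
    (hderiv x hx).congr_of_eventuallyEq
      (eventually_of_mem (Ioi_mem_nhds hx) hagree)
  have htop' : Tendsto (Function.update f a m) atTop (𝓝 n) :=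
    htop.congr' (eventually_of_mem (Ioi_mem_atTop a) fun x hx => (hagree x hx).symm)
  simpa using integral_Ioi_of_hasDerivAt_of_tendsto hcont hderiv' f'int htop'

theorem thomas_fermi_energy_sum_rule
    (y y' : ℝ → ℝ) (B : ℝ)
    (hy' : ∀ x ∈ Ioi (0 : ℝ), HasDerivAt y (y' x) x)
    (hy'' : ∀ x ∈ Ioi (0 : ℝ),
      HasDerivAt y' (y x ^ ((3 : ℝ) / 2) / Real.sqrt x) x)
    (hpos : ∀ x ∈ Ioi (0 : ℝ), 0 < y x)
    (hy0 : Tendsto y (nhdsWithin 0 (Ioi 0)) (nhds 1))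
    (hy'0 : Tendsto y' (nhdsWithin 0 (Ioi 0)) (nhds (-B)))
    (hytop : Tendsto y atTop (nhds 0))
    (hy'top : Tendsto y' atTop (nhds 0))
    (hint : IntegrableOn
      (fun x => (y' x) ^ 2 + y x ^ ((5 : ℝ) / 2) / Real.sqrt x) (Ioi 0)) :
    B = ∫ x in Ioi (0 : ℝ),
      ((y' x) ^ 2 + y x ^ ((5 : ℝ) / 2) / Real.sqrt x) := by
  have hderiv : ∀ x ∈ Ioi (0 : ℝ), HasDerivAt (fun t => y t * y' t)
      ((y' x) ^ 2 + y x ^ ((5 : ℝ) / 2) / Real.sqrt x) x := fun x hx => by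
    have hpow : y x ^ ((5 : ℝ) / 2) = y x ^ ((3 : ℝ) / 2) * y x := by
      rw [← rpow_add_one (hpos x hx).ne']
      norm_num
    refine ((hy' x hx).mul (hy'' x hx)).congr_deriv ?_
    rw [hpow]
    ring
  have hbot : Tendsto (fun t => y t * y' t) (𝓝[>] 0) (𝓝 (-B)) := by
    simpa using hy0.mul hy'0
  have htop : Tendsto (fun t => y t * y' t) atTop (𝓝 0) := by
    simpa using hytop.mul hy'top
  rw [integral_Ioi_of_hasDerivAt_of_tendsto_nhdsGT hderiv hint hbot htop]
  ring
end

section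
/- If y : (0,∞) → ℝ is twice differentiable, satisfies y''(x) = y(x)^{3/2}/sqrt(x), y(0) = 1, y(∞) = 0, and x·y'(x) → 0 as x → ∞ and as x → 0⁺, with √x·y^{3/2} integrable, then ∫₀^∞ sqrt(x)·y(x)^{3/2} dx = 1. -/
open Real MeasureTheory Set Filter

/-! Along a solution, `(x y' - y)' = x y'' = √x y^{3/2}`, so the integral is the increment of
`x y' - y` over `(0, ∞)`, which is `0 - (0 - 1) = 1` by the boundary behaviour of `y` and `x y'`. -/

theorem HasDerivAt.smul_deriv_sub {𝕜 E : Type*} [NontriviallyNormedField 𝕜] [NormedAddCommGroup E]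
    [NormedSpace 𝕜 E] {f f' : 𝕜 → E} {f'' : E} {x : 𝕜} (hf : HasDerivAt f (f' x) x)
    (hf' : HasDerivAt f' f'' x) : HasDerivAt (fun t => t • f' t - f t) (x • f'') x := by
  have h := ((hasDerivAt_id x).smul hf').sub hf
  simp only [id, one_smul, add_sub_cancel_right] at h
  exact h

theorem integral_Ioi_of_hasDerivAt_of_tendsto_nhdsGT_s3 {F f : ℝ → ℝ} {a A B : ℝ}
    (hderiv : ∀ x ∈ Ioi a, HasDerivAt F (f x) x) (hf : IntegrableOn f (Ioi a))
    (hA : Tendsto F (nhdsWithin a (Ioi a)) (nhds A)) (hB : Tendsto F atTop (nhds B)) :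
    ∫ x in Ioi a, f x = B - A := by
  have hF_eq : EqOn (Function.update F a A) F (Ioi a) := fun x hx =>
    Function.update_of_ne hx.out.ne' _ _
  have hcont : ContinuousWithinAt (Function.update F a A) (Ici a) a := by
    rw [← continuousWithinAt_Ioi_iff_Ici, ContinuousWithinAt, Function.update_self]
    exact hA.congr' (eventually_nhdsWithin_of_forall fun x hx => (hF_eq hx).symm)
  have h := integral_Ioi_of_hasDerivAt_of_tendsto hcont
    (fun x hx => (hderiv x hx).congr_of_eventuallyEq
      (Filter.eventuallyEq_of_mem (Ioi_mem_nhds hx) hF_eq))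
    hf (hB.congr' (Filter.eventuallyEq_of_mem (Ioi_mem_atTop a) hF_eq.symm))
  rwa [Function.update_self] at h

theorem thomas_fermi_sum_rule_one
    (y y' : ℝ → ℝ)
    (hy' : ∀ x ∈ Ioi (0 : ℝ), HasDerivAt y (y' x) x)
    (hy'' : ∀ x ∈ Ioi (0 : ℝ),
      HasDerivAt y' (y x ^ ((3 : ℝ) / 2) / Real.sqrt x) x)
    (hy0 : Tendsto y (nhdsWithin 0 (Ioi 0)) (nhds 1))
    (hytop : Tendsto y atTop (nhds 0))
    (hxy'top : Tendsto (fun x => x * y' x) atTop (nhds 0))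
    (hxy'0 : Tendsto (fun x => x * y' x) (nhdsWithin 0 (Ioi 0)) (nhds 0))
    (hint : IntegrableOn (fun x => Real.sqrt x * y x ^ ((3 : ℝ) / 2)) (Ioi 0)) :
    ∫ x in Ioi (0 : ℝ), Real.sqrt x * y x ^ ((3 : ℝ) / 2) = 1 := by
  have hderiv : ∀ x ∈ Ioi (0 : ℝ),
      HasDerivAt (fun t => t * y' t - y t) (Real.sqrt x * y x ^ ((3 : ℝ) / 2)) x := by
    intro x hx
    have h := (hy' x hx).smul_deriv_sub (hy'' x hx)
    simp only [smul_eq_mul] at h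
    rwa [mul_div_left_comm, Real.div_sqrt, mul_comm] at h
  have h := integral_Ioi_of_hasDerivAt_of_tendsto_nhdsGT_s3 hderiv hint
    (by simpa using hxy'0.sub hy0) (by simpa using hxy'top.sub hytop)
  rw [h]
  norm_num
end
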